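/- The map ψ is multiplicative: for any Łukasiewicz paths L and L', the concatenation LL' is a Łukasiewicz path and ψ(LL') = ψ(L)ψ(L'). -/
import Mathlib


/-- A Łukasiewicz path: vertical step components, each `≥ -1`, all partial sums
nonnegative, total sum `0`. -/
def IsLukas (w : List ℤ) : Prop :=
  (∀ s ∈ w, -1 ≤ s) ∧ (∀ k, 0 ≤ (w.take k).sum) ∧ w.sum = 0

/-- `ψ` satisfies the defining recursive equations: `ψ(ε) = ε`,
`ψ(F L) = F ψ(L)`, and
`ψ(U_k L₁ D L₂ D … L_k D L) = U ψ(L₁) F ψ(L₂) F … ψ(L_k) D ψ(L)`. -/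
def PsiEquations (ψ : List ℤ → List ℤ) : Prop :=
  ψ [] = [] ∧
  (∀ L : List ℤ, IsLukas L → ψ (0 :: L) = 0 :: ψ L) ∧
  (∀ (Ls : List (List ℤ)) (L : List ℤ), Ls ≠ [] →
    (∀ M ∈ Ls, IsLukas M) → IsLukas L →
    ψ ((Ls.length : ℤ) :: ((Ls.map fun M => M ++ [(-1 : ℤ)]).flatten ++ L)) =
      1 :: ((List.intersperse [(0 : ℤ)] (Ls.map ψ)).flatten ++ (-1 : ℤ) :: ψ L))

lemma isLukas_append {L L' : List ℤ} (h : IsLukas L) (h' : IsLukas L') :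
    IsLukas (L ++ L') := by
  obtain ⟨h1, h2, h3⟩ := h
  obtain ⟨h1', h2', h3'⟩ := h'
  refine ⟨?_, ?_, ?_⟩
  · intro s hs
    rcases List.mem_append.1 hs with h | h
    exacts [h1 s h, h1' s h]
  · intro k
    rw [List.take_append, List.sum_append]
    exact add_nonneg (h2 k) (h2' _)
  · simp [h3, h3']

lemma decompAux : ∀ (a : ℕ) (w : List ℤ),
    (∀ s ∈ w, -1 ≤ s) → (∀ k, 0 ≤ (a : ℤ) + (w.take k).sum) →
    (a : ℤ) + w.sum = 0 →
    ∃ (Ls : List (List ℤ)) (L₂ : List ℤ), Ls.length = a ∧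
      (∀ M ∈ Ls, IsLukas M) ∧ IsLukas L₂ ∧
      w = (Ls.map fun M => M ++ [(-1 : ℤ)]).flatten ++ L₂ := by
  intro a
  induction a with
  | zero =>
    intro w h1 h2 h3
    exact ⟨[], w, rfl, by simp, ⟨h1, by simpa using h2, by simpa using h3⟩, by simp⟩
  | succ a ih =>
    intro w h1 h2 h3
    classical
    have hex : ∃ j, (w.take j).sum ≤ -1 := by
      refine ⟨w.length, ?_⟩
      rw [List.take_length]
      push_cast at h3
      omega
    have hj : (w.take (Nat.find hex)).sum ≤ -1 := Nat.find_spec hex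
    have hmin : ∀ k < Nat.find hex, 0 ≤ (w.take k).sum := by
      intro k hk
      have := Nat.find_min hex hk
      omega
    have hj0 : Nat.find hex ≠ 0 := by
      intro h
      rw [h] at hj
      simp at hj
    obtain ⟨i, hji⟩ := Nat.exists_eq_succ_of_ne_zero hj0
    have hjlen : Nat.find hex ≤ w.length := by
      apply Nat.find_le
      rw [List.take_length]
      push_cast at h3
      omega
    have hilen : i < w.length := by omega
    have htake : w.take (i + 1) = w.take i ++ [w[i]] := by
      rw [List.take_succ, List.getElem?_eq_getElem hilen]
      rfl
    rw [hji] at hj hmin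
    have hgi : -1 ≤ w[i] := h1 _ (List.getElem_mem hilen)
    have hti : 0 ≤ (w.take i).sum := hmin i (by omega)
    rw [htake, List.sum_append] at hj
    simp at hj
    have heq1 : (w.take i).sum = 0 := by omega
    have heq2 : w[i] = -1 := by omega
    have hs1 : (w.take (i + 1)).sum = -1 := by
      rw [htake, List.sum_append]
      simp [heq1, heq2]
    have hw : w = w.take i ++ (-1 : ℤ) :: w.drop (i + 1) := by
      conv_lhs => rw [← List.take_append_drop (i + 1) w]
      rw [htake, heq2]
      simp
    -- rest hypotheses
    have hr1 : ∀ s ∈ w.drop (i + 1), -1 ≤ s := fun s hs => h1 s (List.drop_subset _ _ hs)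
    have hr2 : ∀ k, 0 ≤ (a : ℤ) + ((w.drop (i + 1)).take k).sum := by
      intro k
      have := h2 (i + 1 + k)
      rw [List.take_add, List.sum_append, hs1] at this
      push_cast at this
      omega
    have hr3 : (a : ℤ) + (w.drop (i + 1)).sum = 0 := by
      have := h3
      conv at this => rw [hw]
      rw [List.sum_append] at this
      simp [heq1] at this
      omega
    obtain ⟨Ls', L₂, hlen', hLs', hL₂, hrest⟩ := ih (w.drop (i + 1)) hr1 hr2 hr3
    refine ⟨w.take i :: Ls', L₂, by simp [hlen'], ?_, hL₂, ?_⟩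
    · intro M hM
      rcases List.mem_cons.1 hM with rfl | hM
      · refine ⟨fun s hs => h1 s (List.take_subset _ _ hs), ?_, heq1⟩
        intro k
        rw [List.take_take]
        exact hmin _ (by omega)
      · exact hLs' M hM
    · conv_lhs => rw [hw, hrest]
      simp

lemma psi_mult_aux (ψ : List ℤ → List ℤ) (hψ : PsiEquations ψ) :
    ∀ n (L L' : List ℤ), L.length ≤ n → IsLukas L → IsLukas L' →
      ψ (L ++ L') = ψ L ++ ψ L' := by
  obtain ⟨hε, hF, hU⟩ := hψ
  intro n
  induction n with
  | zero =>
    intro L L' h hL hL'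
    have : L = [] := List.eq_nil_of_length_eq_zero (by omega)
    subst this
    simp [hε]
  | succ n ih =>
    intro L L' hlen hL hL'
    match L, hL, hlen with
    | [], hL, hlen => simp [hε]
    | a :: w, hL, hlen =>
      have hwlen : w.length ≤ n := by simpa using hlen
      have ha : 0 ≤ a := by
        have := hL.2.1 1
        simpa using this
      rcases eq_or_lt_of_le ha with h0 | h1
      · -- a = 0
        have hw : IsLukas w :=
          ⟨fun s hs => hL.1 s (by simp [hs]),
           fun k => by have := hL.2.1 (k + 1); rw [List.take_succ_cons, List.sum_cons, ← h0] at this; simpa using this,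
           by have := hL.2.2; rw [List.sum_cons, ← h0] at this; simpa using this⟩
        have hww' : IsLukas (w ++ L') := isLukas_append hw hL'
        rw [← h0]
        have : ((0 : ℤ) :: w) ++ L' = (0 : ℤ) :: (w ++ L') := by simp
        rw [this, hF _ hww', ih w L' hwlen hw hL', hF w hw]
        simp
      · -- a ≥ 1
        have hent : ∀ s ∈ w, -1 ≤ s := fun s hs => hL.1 s (by simp [hs])
        have hpre : ∀ k, 0 ≤ (a.toNat : ℤ) + (w.take k).sum := by
          intro k
          have := hL.2.1 (k + 1)
          rw [List.take_succ_cons, List.sum_cons] at this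
          rw [Int.toNat_of_nonneg ha]
          exact this
        have hsum : (a.toNat : ℤ) + w.sum = 0 := by
          have := hL.2.2
          rw [List.sum_cons] at this
          rw [Int.toNat_of_nonneg ha]
          exact this
        obtain ⟨Ls, L₂, hlenLs, hLs, hL₂, hweq⟩ := decompAux a.toNat w hent hpre hsum
        have hLs0 : Ls ≠ [] := by
          rintro rfl
          simp at hlenLs
          omega
        have hacast : (Ls.length : ℤ) = a := by
          rw [hlenLs, Int.toNat_of_nonneg ha]
        have hL₂len : L₂.length ≤ n := by
          have h1 : L₂.length ≤ w.length := by rw [hweq]; simp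
          omega
        have hIH : ψ (L₂ ++ L') = ψ L₂ ++ ψ L' := ih L₂ L' hL₂len hL₂ hL'
        have e1 := hU Ls (L₂ ++ L') hLs0 hLs (isLukas_append hL₂ hL')
        have e2 := hU Ls L₂ hLs0 hLs hL₂
        have key : a :: (w ++ L') =
            (Ls.length : ℤ) :: ((Ls.map fun M => M ++ [(-1 : ℤ)]).flatten ++ (L₂ ++ L')) := by
          rw [hacast, hweq, List.append_assoc]
        have key2 : a :: w =
            (Ls.length : ℤ) :: ((Ls.map fun M => M ++ [(-1 : ℤ)]).flatten ++ L₂) := by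
          rw [hacast, hweq]
        show ψ (a :: (w ++ L')) = ψ (a :: w) ++ ψ L'
        rw [key, e1, hIH, key2, e2]
        simp

/-- `ψ` is multiplicative: for Łukasiewicz paths `L, L'`, the concatenation
`L ++ L'` is a Łukasiewicz path and `ψ (L ++ L') = ψ L ++ ψ L'`. -/
theorem psi_multiplicative (ψ : List ℤ → List ℤ) (hψ : PsiEquations ψ)
    (L L' : List ℤ) (hL : IsLukas L) (hL' : IsLukas L') :
    IsLukas (L ++ L') ∧ ψ (L ++ L') = ψ L ++ ψ L' :=
  ⟨isLukas_append hL hL', psi_mult_aux ψ hψ L.length L L' le_rfl hL hL'⟩
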